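/- The set of unit vectors in ℝ³ all of whose coordinates are rational is dense in the unit sphere S² = {x ∈ ℝ³ : ‖x‖ = 1}; that is, for every x ∈ S² and every ε > 0 there exists q ∈ ℝ³ with ‖q‖ = 1, all three coordinates of q rational, and ‖x − q‖ < ε. -/

import Mathlib

/-!
Inverse stereographic projection from the north pole `N = (0, 0, 1)` is a continuous map
from `ℝ²` onto `S² \ {N}` given by rational functions with rational coefficients, so it sends
rational points to rational unit vectors. Since `ℚ²` is dense in `ℝ²`, their images are dense in
`S² \ {N}`, and `N` is itself rational.
-/

open Metric

noncomputable section

def invStereo (p : ℝ × ℝ) : EuclideanSpace ℝ (Fin 3) :=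
  WithLp.toLp 2 ![2 * p.1 / (p.1 ^ 2 + p.2 ^ 2 + 1), 2 * p.2 / (p.1 ^ 2 + p.2 ^ 2 + 1),
    (p.1 ^ 2 + p.2 ^ 2 - 1) / (p.1 ^ 2 + p.2 ^ 2 + 1)]

def stereo (x : EuclideanSpace ℝ (Fin 3)) : ℝ × ℝ :=
  (x 0 / (1 - x 2), x 1 / (1 - x 2))

end

lemma sum_sq_coord_eq_one {x : EuclideanSpace ℝ (Fin 3)} (hx : ‖x‖ = 1) :
    x 0 ^ 2 + x 1 ^ 2 + x 2 ^ 2 = 1 := by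
  have h := EuclideanSpace.norm_sq_eq x
  simpa [hx, Fin.sum_univ_three, Real.norm_eq_abs, sq_abs, eq_comm] using h

lemma norm_invStereo (p : ℝ × ℝ) : ‖invStereo p‖ = 1 := by
  have hd : p.1 ^ 2 + p.2 ^ 2 + 1 ≠ 0 := by positivity
  rw [← pow_eq_one_iff_of_nonneg (norm_nonneg _) two_ne_zero, EuclideanSpace.norm_sq_eq]
  simp [invStereo, Fin.sum_univ_three]
  field_simp
  ring

lemma continuous_invStereo : Continuous invStereo := by
  refine (PiLp.continuous_toLp 2 _).comp (continuous_pi fun i => ?_)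
  fin_cases i <;>
    exact Continuous.div (by fun_prop) (by fun_prop) fun p => by positivity

lemma invStereo_stereo {x : EuclideanSpace ℝ (Fin 3)} (hx : ‖x‖ = 1) (hN : x 2 ≠ 1) :
    invStereo (stereo x) = x := by
  have hsum := sum_sq_coord_eq_one hx
  have ht : 1 - x 2 ≠ 0 := sub_ne_zero.mpr hN.symm
  ext i
  fin_cases i <;> simp [invStereo, stereo] <;> field_simp
  · linear_combination (-x 0) * hsum
  · linear_combination (-x 1) * hsum
  · linear_combination (1 - x 2) * hsum

lemma exists_rat_invStereo_ratCast (u v : ℚ) (i : Fin 3) :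
    ∃ r : ℚ, invStereo ((u : ℝ), (v : ℝ)) i = r := by
  fin_cases i
  · exact ⟨2 * u / (u ^ 2 + v ^ 2 + 1), by simp [invStereo]⟩
  · exact ⟨2 * v / (u ^ 2 + v ^ 2 + 1), by simp [invStereo]⟩
  · exact ⟨(u ^ 2 + v ^ 2 - 1) / (u ^ 2 + v ^ 2 + 1), by simp [invStereo]⟩

lemma coord_eq_zero_of_coord_two_eq_one {x : EuclideanSpace ℝ (Fin 3)} (hx : ‖x‖ = 1)
    (hN : x 2 = 1) : x 0 = 0 ∧ x 1 = 0 := by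
  have hsum := sum_sq_coord_eq_one hx
  constructor <;> nlinarith [sq_nonneg (x 0), sq_nonneg (x 1)]

lemma denseRange_ratCast_prod : DenseRange fun q : ℚ × ℚ => ((q.1 : ℝ), (q.2 : ℝ)) :=
  Rat.denseRange_cast.prodMap Rat.denseRange_cast

theorem rational_unit_vectors_dense_in_sphere :
    ∀ x : EuclideanSpace ℝ (Fin 3), ‖x‖ = 1 → ∀ ε : ℝ, 0 < ε →
      ∃ q : EuclideanSpace ℝ (Fin 3), ‖q‖ = 1 ∧ (∀ i, ∃ r : ℚ, q i = (r : ℝ)) ∧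
        ‖x - q‖ < ε := by
  intro x hx ε hε
  by_cases hN : x 2 = 1
  · obtain ⟨h0, h1⟩ := coord_eq_zero_of_coord_two_eq_one hx hN
    refine ⟨x, hx, fun i => ?_, by simpa using hε⟩
    fin_cases i
    exacts [⟨0, by simpa using h0⟩, ⟨0, by simpa using h1⟩, ⟨1, by simpa using hN⟩]
  · have hopen : IsOpen (invStereo ⁻¹' ball x ε) := isOpen_ball.preimage continuous_invStereo
    have hmem : stereo x ∈ invStereo ⁻¹' ball x ε := by
      simpa [invStereo_stereo hx hN] using hε
    obtain ⟨⟨u, v⟩, huv⟩ := denseRange_ratCast_prod.exists_mem_open hopen ⟨_, hmem⟩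
    refine ⟨invStereo ((u : ℝ), (v : ℝ)), norm_invStereo _, exists_rat_invStereo_ratCast u v,
      ?_⟩
    simpa [mem_ball, dist_eq_norm, norm_sub_rev] using huv
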